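/- For all T > 0 and λ > 0, the threshold κ̃(T,λ) = (1 - e^{λT} + λT)/(2 - 2e^{λT} + λT) is strictly less than κ^{FI}(T,λ) = (1 - e^{-λT})/(2 - e^{-λT}). -/

import Mathlib

/-! With `x = λT` and `E = e^x`, both thresholds are ratios in `E` and `x`:
`κ̃ = (E - 1 - x) / (2E - 2 - x)` and `κ^{FI} = (E - 1) / (2E - 1)`. Cross-multiplying, `κ̃ < κ^{FI}`
reduces to `E - 1 < xE`, i.e. to `1 - x < e^{-x}`, the tangent-line bound for `exp` at `0`. -/

open Real

theorem exp_sub_one_lt_mul_exp {x : ℝ} (hx : x ≠ 0) : exp x - 1 < x * exp x := by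
  have h := add_one_lt_exp (neg_ne_zero.mpr hx)
  rw [exp_neg] at h
  have hE := exp_pos x
  have h' := mul_lt_mul_of_pos_right h hE
  rw [inv_mul_cancel₀ hE.ne'] at h'
  linarith

theorem kappaTilde_lt_kappaFI_of_bounds {x E : ℝ} (hx : 0 < x) (hlow : 1 + x < E) (hup : E - 1 < x * E) :
    (1 - E + x) / (2 - 2 * E + x) < (1 - E⁻¹) / (2 - E⁻¹) := by
  have hE : 0 < E := by linarith
  have hleft : (1 - E + x) / (2 - 2 * E + x) = (E - 1 - x) / (2 * E - 2 - x) := by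
    rw [← neg_div_neg_eq]; ring_nf
  have hright : (1 - E⁻¹) / (2 - E⁻¹) = (E - 1) / (2 * E - 1) := by
    field_simp
  rw [hleft, hright, div_lt_div_iff₀ (by linarith) (by linarith)]
  linear_combination hup

/-- For all T, λ > 0, κ̃(T,λ) < κ^{FI}(T,λ). -/
theorem stmt_9 (l T : ℝ) (hl : 0 < l) (hT : 0 < T) :
    (1 - Real.exp (l * T) + l * T) / (2 - 2 * Real.exp (l * T) + l * T) <
      (1 - Real.exp (-(l * T))) / (2 - Real.exp (-(l * T))) := by
  have hx : 0 < l * T := mul_pos hl hT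
  rw [exp_neg]
  exact kappaTilde_lt_kappaFI_of_bounds hx (by linarith [add_one_lt_exp hx.ne'])
    (exp_sub_one_lt_mul_exp hx.ne')
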